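/- arXiv:2505.13751 — 4 statements merged into one kernel-verified Lean document; each statement's English description precedes it below -/
import Mathlib

section
/- With unconditional inclusion lists, m·w ≤ m·c_Incl ≤ c_block, B₁ < sum, and Σ_{j=1}^m B^j < m·f_CM, there is no Nash equilibrium in which t₀ is excluded from the block. Proof structure: since B₁ < sum, at equilibrium the block producer includes all inclusion-list transactions; since t₀ is not in the block, no includer listed t₀; since the sum of bribes is less than m·f_CM, some includer j has B^j < f_CM and would strictly gain f_CM − B^j > 0 by listing t₀ — contradiction. -/
/-!
An invalid block keeps only the bribe `B1`, while a valid one earns `sum > max 0 B1`, so at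
equilibrium the producer includes every listed transaction. Then, were `t₀` unlisted, some includer `j`
has `B j < fCM` because the bribes sum to less than `m * fCM`, and listing `t₀` alone would earn it
the whole committee fee `fCM` instead of `B j`.
-/

open Finset

namespace CensorshipGame

variable {m : ℕ}

/-- `σ j = true` means that includer `j` lists `t₀`; `bp = true` means that the producer builds a
valid block, which then contains every listed transaction. The fee goes to the smallest listing
index. -/
def includerUtility (fCM : ℝ) (B : Fin m → ℝ) (σ : Fin m → Bool) (bp : Bool) (j : Fin m) : ℝ :=
  if σ j then (if bp = true ∧ ∀ i, σ i = true → j ≤ i then fCM else 0) else B j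

/-- A valid block earns `sum`, plus the bribe `B1` when nobody listed `t₀` (so it can be left out);
an invalid block forfeits `sum` but keeps the bribe. -/
def producerUtility (sum B1 : ℝ) (σ : Fin m → Bool) (bp : Bool) : ℝ :=
  if bp then sum + (if ∀ j, σ j = false then B1 else 0) else B1

theorem eq_true_of_producerUtility_le {sum B1 : ℝ} (hsum : 0 < sum) (hB1 : B1 < sum)
    {σ : Fin m → Bool} {bp : Bool}
    (hbest : ∀ b, producerUtility sum B1 σ b ≤ producerUtility sum B1 σ bp) : bp = true := by
  by_contra hbp
  have hvalid := hbest true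
  simp only [producerUtility, hbp, if_true, if_false] at hvalid
  split_ifs at hvalid <;> linarith

theorem includerUtility_of_eq_false {fCM : ℝ} {B : Fin m → ℝ} {σ : Fin m → Bool}
    {j : Fin m} (hj : σ j = false) (bp : Bool) : includerUtility fCM B σ bp j = B j := by
  simp [includerUtility, hj]

theorem includerUtility_update_true_of_forall_eq_false {fCM : ℝ} {B : Fin m → ℝ}
    {σ : Fin m → Bool} (hσ : ∀ i, σ i = false) (j : Fin m) :
    includerUtility fCM B (Function.update σ j true) true j = fCM := by
  have hfirst : ∀ i, Function.update σ j true i = true → j ≤ i := by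
    intro i hi
    by_cases hij : i = j
    · exact hij.ge
    · simp [Function.update_of_ne hij, hσ i] at hi
  rw [includerUtility, if_pos (Function.update_self j true σ), if_pos ⟨rfl, hfirst⟩]

theorem exists_lt_of_sum_lt_card_mul {ι : Type*} [Fintype ι] {f : ι → ℝ} {c : ℝ}
    (h : ∑ i, f i < Fintype.card ι * c) : ∃ i, f i < c := by
  obtain ⟨i, -, hi⟩ := exists_lt_of_sum_lt (s := univ) (g := fun _ => c) (by simpa using h)
  exact ⟨i, hi⟩

end CensorshipGame

open CensorshipGame in
theorem stmt8_general (m : ℕ)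
    (sum fCM B1 : ℝ) (B : Fin m → ℝ)
    (hsum : 0 < sum)
    (hB1 : B1 < sum) (hSB : ∑ j, B j < (m : ℝ) * fCM) :
    let uCM : (Fin m → Bool) → Bool → Fin m → ℝ := fun σ bp j =>
      if σ j then (if bp = true ∧ ∀ i, σ i = true → j ≤ i then fCM else 0) else B j
    let uBP : (Fin m → Bool) → Bool → ℝ := fun σ bp =>
      if bp then sum + (if ∀ j, σ j = false then B1 else 0) else B1
    ∀ (σ : Fin m → Bool) (bp : Bool),
      ((∀ j b, uCM (Function.update σ j b) bp j ≤ uCM σ bp j) ∧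
          (∀ b, uBP σ b ≤ uBP σ bp)) →
        bp = true ∧ ∃ j, σ j = true := by
  intro uCM uBP σ bp ⟨hCM, hBP⟩
  obtain rfl : bp = true := eq_true_of_producerUtility_le hsum hB1 hBP
  refine ⟨rfl, ?_⟩
  by_contra! hunlisted
  simp only [ne_eq, Bool.not_eq_true] at hunlisted
  obtain ⟨j, hj⟩ := exists_lt_of_sum_lt_card_mul (f := B) (by simpa using hSB)
  have hdeviate : includerUtility fCM B (Function.update σ j true) true j ≤
      includerUtility fCM B σ true j := hCM j true
  rw [includerUtility_update_true_of_forall_eq_false hunlisted,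
    includerUtility_of_eq_false (hunlisted j)] at hdeviate
  linarith

/-- Unconditional lists, m·w ≤ m·c_Incl ≤ c_block, B₁ < sum and Σ B^j < m·f_CM:
there is no Nash equilibrium in which t₀ is excluded from the block. -/
theorem stmt8 (m w cIncl cblock : ℕ) (hm : 1 ≤ m)
    (hcap1 : m * w ≤ m * cIncl) (hcap2 : m * cIncl ≤ cblock)
    (sum fCM B1 : ℝ) (B : Fin m → ℝ)
    (hsum : 0 < sum) (hfCM : 0 < fCM) (hBnn : ∀ j, 0 ≤ B j)
    (hB1 : B1 < sum) (hSB : ∑ j, B j < (m : ℝ) * fCM) :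
    let uCM : (Fin m → Bool) → Bool → Fin m → ℝ := fun σ bp j =>
      if σ j then (if bp = true ∧ ∀ i, σ i = true → j ≤ i then fCM else 0) else B j
    let uBP : (Fin m → Bool) → Bool → ℝ := fun σ bp =>
      if bp then sum + (if ∀ j, σ j = false then B1 else 0) else B1
    ∀ (σ : Fin m → Bool) (bp : Bool),
      ((∀ j b, uCM (Function.update σ j b) bp j ≤ uCM σ bp j) ∧
          (∀ b, uBP σ b ≤ uBP σ bp)) →
        bp = true ∧ ∃ j, σ j = true :=
  stmt8_general m sum fCM B1 B hsum hB1 hSB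
end

section
/- In the Double TFM with burning fee r > 0 and block producer cost μ_BP ≥ 0 per unit of size, assume users cannot overbid (c_t ≤ v_t) and the block producer includes a transaction iff δ^BP_t ≥ μ_BP and c_t ≥ r + μ_BP. Then the bid b_t = (0, μ_BP, min{v_t, r + μ_BP}) is utility-maximizing for the user among all bids with c_t ≤ v_t: if v_t ≥ r + μ_BP the bid yields utility (v_t − r − μ_BP)·s ≥ 0 and no bid with smaller total fee achieves inclusion; if v_t < r + μ_BP no feasible bid yields positive utility. -/
/-!
Only the block-producer part of the fee matters for inclusion, and an included bid pays at least
`μ` beyond the burn `r`, since `δ^BP ≥ μ` and `c - r ≥ μ`. The bid `(0, μ, r + μ)` pays exactly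
that, so it is optimal whenever `v ≥ r + μ`; when `v < r + μ`, no bid with `c ≤ v` is included.
-/

namespace DoubleTFM

/-- Total fee beyond the burn `r`: the block producer's share, then the committee's share out of
what remains of `c - r`. -/
noncomputable def fee (r δCM δBP c : ℝ) : ℝ :=
  max (min δBP (c - r)) 0 + max (min δCM (c - r - max (min δBP (c - r)) 0)) 0

noncomputable def utility (r μ s v δCM δBP c : ℝ) : ℝ :=
  if μ ≤ δBP ∧ r + μ ≤ c then (v - r - fee r δCM δBP c) * s else 0

variable {r μ s v : ℝ}

theorem fee_zero_left (δBP c : ℝ) : fee r 0 δBP c = max (min δBP (c - r)) 0 := by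
  rw [fee, max_eq_right (min_le_left _ _), add_zero]

theorem fee_zero_self (hμ : 0 ≤ μ) : fee r 0 μ (r + μ) = μ := by
  rw [fee_zero_left, add_sub_cancel_left, min_self, max_eq_left hμ]

theorem le_fee {δCM δBP c : ℝ} (hBP : μ ≤ δBP) (hc : r + μ ≤ c) : μ ≤ fee r δCM δBP c := by
  have hBPfee : μ ≤ max (min δBP (c - r)) 0 :=
    (le_min hBP (by linarith)).trans (le_max_left _ _)
  unfold fee
  linarith [le_max_right (min δCM (c - r - max (min δBP (c - r)) 0)) 0]

theorem utility_truthful (hμ : 0 ≤ μ) (hv : r + μ ≤ v) :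
    utility r μ s v 0 μ (min v (r + μ)) = (v - r - μ) * s := by
  rw [utility, min_eq_right hv, if_pos ⟨le_rfl, le_rfl⟩, fee_zero_self hμ]

theorem utility_le (hs : 0 ≤ s) (hv : r + μ ≤ v) (δCM δBP c : ℝ) :
    utility r μ s v δCM δBP c ≤ (v - r - μ) * s := by
  unfold utility
  split_ifs with hincl
  · exact mul_le_mul_of_nonneg_right (by linarith [le_fee (δCM := δCM) hincl.1 hincl.2]) hs
  · exact mul_nonneg (by linarith) hs

theorem utility_eq_zero_of_lt {δCM δBP c : ℝ} (hv : v < r + μ) (hcv : c ≤ v) :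
    utility r μ s v δCM δBP c = 0 :=
  if_neg fun hincl => by linarith [hincl.2]

end DoubleTFM

open DoubleTFM in
theorem stmt10_general (r μ s v : ℝ) (hμ : 0 ≤ μ) (hs : 0 < s) :
    let fee : ℝ → ℝ → ℝ → ℝ := fun δCM δBP c =>
      max (min δBP (c - r)) 0 + max (min δCM (c - r - max (min δBP (c - r)) 0)) 0
    let u : ℝ → ℝ → ℝ → ℝ := fun δCM δBP c =>
      if μ ≤ δBP ∧ r + μ ≤ c then (v - r - fee δCM δBP c) * s else 0
    (r + μ ≤ v → u 0 μ (min v (r + μ)) = (v - r - μ) * s ∧ 0 ≤ (v - r - μ) * s) ∧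
      ∀ δCM δBP c, 0 ≤ δCM → 0 ≤ δBP → c ≤ v →
        u δCM δBP c ≤ u 0 μ (min v (r + μ)) := by
  show (r + μ ≤ v → utility r μ s v 0 μ (min v (r + μ)) = (v - r - μ) * s ∧
      0 ≤ (v - r - μ) * s) ∧
    ∀ δCM δBP c, 0 ≤ δCM → 0 ≤ δBP → c ≤ v →
      utility r μ s v δCM δBP c ≤ utility r μ s v 0 μ (min v (r + μ))
  refine ⟨fun hv => ⟨utility_truthful hμ hv, mul_nonneg (by linarith) hs.le⟩, ?_⟩
  intro δCM δBP c _ _ hcv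
  rcases le_or_gt (r + μ) v with hv | hv
  · rw [utility_truthful hμ hv]
    exact utility_le hs.le hv δCM δBP c
  · rw [utility_eq_zero_of_lt hv hcv, utility_eq_zero_of_lt hv (min_le_left v (r + μ))]

/-- Double TFM "usually DSIC": with no overbidding (c ≤ v) and inclusion iff
δ^BP ≥ μ and c ≥ r + μ, the bid (δ^CM, δ^BP, c) = (0, μ, min{v, r+μ}) maximizes the
user's utility; when v ≥ r + μ it yields utility (v − r − μ)·s ≥ 0. -/
theorem stmt10 (r μ s v : ℝ) (hr : 0 < r) (hμ : 0 ≤ μ) (hs : 0 < s) :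
    let fee : ℝ → ℝ → ℝ → ℝ := fun δCM δBP c =>
      max (min δBP (c - r)) 0 + max (min δCM (c - r - max (min δBP (c - r)) 0)) 0
    let u : ℝ → ℝ → ℝ → ℝ := fun δCM δBP c =>
      if μ ≤ δBP ∧ r + μ ≤ c then (v - r - fee δCM δBP c) * s else 0
    (r + μ ≤ v → u 0 μ (min v (r + μ)) = (v - r - μ) * s ∧ 0 ≤ (v - r - μ) * s) ∧
      ∀ δCM δBP c, 0 ≤ δCM → 0 ≤ δBP → c ≤ v →
        u δCM δBP c ≤ u 0 μ (min v (r + μ)) :=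
  stmt10_general r μ s v hμ hs
end

section
/- In the Single TFM, under the same assumptions (no overbidding, inclusion iff c_t ≥ r + μ_BP), the bid c_t = min{v_t, r + μ_BP} is a dominant strategy for the user: it achieves utility max{v_t − r − μ_BP, 0}·s, and no alternative bid c'_t ≤ v_t achieves strictly higher utility. -/
/-! With threshold `p = r + μ`, a winning bid `c ≥ p` earns `(v - c) s ≤ (v - p) s` and a losing
bid earns `0`, so no bid beats `max (v - p) 0 * s`; the bid `min v p` attains this bound. -/

noncomputable def thresholdUtility (p v s c : ℝ) : ℝ := if p ≤ c then (v - c) * s else 0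

theorem thresholdUtility_min_self (p v s : ℝ) :
    thresholdUtility p v s (min v p) = max (v - p) 0 * s := by
  rcases le_total v p with h | h
  · simp [thresholdUtility, min_eq_left h, max_eq_right (sub_nonpos.2 h)]
  · simp [thresholdUtility, min_eq_right h, max_eq_left (sub_nonneg.2 h)]

theorem thresholdUtility_le {s : ℝ} (hs : 0 ≤ s) (p v c : ℝ) :
    thresholdUtility p v s c ≤ max (v - p) 0 * s := by
  unfold thresholdUtility
  split_ifs with hc
  · exact mul_le_mul_of_nonneg_right (le_max_of_le_left (by linarith)) hs
  · exact mul_nonneg (le_max_right _ _) hs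

theorem stmt11_general (r μ s v : ℝ) (hs : 0 < s) :
    let u : ℝ → ℝ := fun c => if r + μ ≤ c then (v - c) * s else 0
    u (min v (r + μ)) = max (v - r - μ) 0 * s ∧
      ∀ c : ℝ, c ≤ v → u c ≤ u (min v (r + μ)) := by
  change thresholdUtility (r + μ) v s (min v (r + μ)) = max (v - r - μ) 0 * s ∧
    ∀ c : ℝ, c ≤ v → thresholdUtility (r + μ) v s c ≤ thresholdUtility (r + μ) v s (min v (r + μ))
  rw [thresholdUtility_min_self, sub_sub]
  exact ⟨rfl, fun c _ => thresholdUtility_le hs.le _ _ c⟩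

/-- Single TFM "usually DSIC": with no overbidding and inclusion iff c ≥ r + μ,
bidding c = min{v, r+μ} yields utility max{v − r − μ, 0}·s and no bid c' ≤ v does
strictly better. -/
theorem stmt11 (r μ s v : ℝ) (hr : 0 < r) (hμ : 0 ≤ μ) (hs : 0 < s) :
    let u : ℝ → ℝ := fun c => if r + μ ≤ c then (v - c) * s else 0
    u (min v (r + μ)) = max (v - r - μ) 0 * s ∧
      ∀ c : ℝ, c ≤ v → u c ≤ u (min v (r + μ)) :=
  stmt11_general r μ s v hs
end

section
/- Sequential greedy partition optimality: let transactions have distinct committee fees and fix capacity c per includer and m includers. Define the indicated assignment: includer 1 takes the c highest-fee transactions, includer 2 the next c, etc. Then for includer j, given includers 1,…,j−1 follow the rule, any transaction already taken by an includer with smaller order yields includer j fee 0 (payment goes to the smallest-order lister), while any transaction not assigned to includers 1,…,j has committee fee at most that of every transaction in includer j's assigned set. Hence includer j's assigned set maximizes their total committee fee among all size-≤c subsets of the mempool given the others' lists. -/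
/-!
Transactions at positions below `(j - 1) * c` are already paid to earlier includers, so only
`S \ range ((j - 1) * c)` counts. Its elements all sit at positions `≥ (j - 1) * c`, and its
`k`-th smallest element sits at position `≥ (j - 1) * c + k`; since the fees decrease, the
fees of `S` are dominated termwise by those of the assigned block, whose surplus terms are
nonnegative.
-/

open Finset

theorem Antitone.sum_le_sum_Ico {M : Type*} [AddCommMonoid M] [PartialOrder M]
    [IsOrderedAddMonoid M] {f : ℕ → M} (hf : Antitone f) (hf0 : ∀ i, 0 ≤ f i)
    (S : Finset ℕ) {a c : ℕ} (hcard : #S ≤ c) (hS : ∀ x ∈ S, a ≤ x) :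
    ∑ t ∈ S, f t ≤ ∑ t ∈ Ico a (a + c), f t := by
  induction S using Finset.induction_on_min generalizing a c with
  | empty => exact sum_nonneg fun i _ => hf0 i
  | insert b S hbS ih =>
    have hb : b ∉ S := fun h => (hbS b h).false
    rw [card_insert_of_notMem hb] at hcard
    obtain ⟨c, rfl⟩ : ∃ c', c = c' + 1 := ⟨c - 1, by omega⟩
    have hab : a ≤ b := hS b (mem_insert_self b S)
    have hrest : ∑ t ∈ S, f t ≤ ∑ t ∈ Ico (a + 1) (a + 1 + c), f t :=
      ih (by omega) fun x hx => by have := hbS x hx; omega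
    have hblock : Ico a (a + (c + 1)) = insert a (Ico (a + 1) (a + 1 + c)) := by
      ext y; simp only [mem_Ico, mem_insert]; omega
    rw [sum_insert hb, hblock, sum_insert (by simp)]
    exact add_le_add (hf hab) hrest

theorem stmt18_general (c n j : ℕ) (hj1 : 1 ≤ j)
    (f : ℕ → ℝ) (hf : StrictAnti f) (hf0 : ∀ i, 0 ≤ f i) :
    let taken : Finset ℕ := Finset.range ((j - 1) * c)
    let Aj : Finset ℕ := Finset.Ico ((j - 1) * c) (j * c)
    let payoff : Finset ℕ → ℝ := fun S => ∑ t ∈ S \ taken, f t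
    ∀ S ⊆ Finset.range n, S.card ≤ c → payoff S ≤ payoff Aj := by
  intro taken Aj payoff S _ hScard
  have hAj : Aj = Ico ((j - 1) * c) ((j - 1) * c + c) := by
    rw [← add_one_mul, Nat.sub_add_cancel hj1]
  have hAj_untaken : Aj \ taken = Aj := by
    refine sdiff_eq_self_of_disjoint (disjoint_left.mpr fun x hxA hxT => ?_)
    simp only [Aj, taken, mem_Ico, mem_range] at hxA hxT
    omega
  show ∑ t ∈ S \ taken, f t ≤ ∑ t ∈ Aj \ taken, f t
  rw [hAj_untaken, hAj]
  refine hf.antitone.sum_le_sum_Ico hf0 _ ((card_le_card sdiff_subset).trans hScard) ?_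
  intro x hx
  simpa [taken] using (mem_sdiff.mp hx).2

/-- Sequential greedy partition optimality for includers: with transactions sorted by
strictly decreasing committee fee, includer j's assigned block of positions
(j−1)·c … j·c−1 maximizes their payoff (the sum of fees of listed transactions not
listed by any smaller-order includer) among all size-≤ c subsets of the mempool. -/
theorem stmt18 (m c n j : ℕ) (hj1 : 1 ≤ j) (hjm : j ≤ m) (hn : j * c ≤ n)
    (f : ℕ → ℝ) (hf : StrictAnti f) (hf0 : ∀ i, 0 ≤ f i) :
    let taken : Finset ℕ := Finset.range ((j - 1) * c)
    let Aj : Finset ℕ := Finset.Ico ((j - 1) * c) (j * c)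
    let payoff : Finset ℕ → ℝ := fun S => ∑ t ∈ S \ taken, f t
    ∀ S ⊆ Finset.range n, S.card ≤ c → payoff S ≤ payoff Aj :=
  stmt18_general c n j hj1 f hf hf0
end
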